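/- Fix an integer k ≥ 1 and define, for n ≥ k, r'(k,n) := 1 if p(k,n) = t(n) − 1 or split(n, p(k,n) + 1) holds, and r'(k,n) := 0 otherwise (the indicator that the k-th most recently appended leaf lies in the leftmost mountain of its range in the MMB structure on n leaves). Then liminf_{N→∞} (1/N)·Σ_{n=k}^{k+N−1} r'(k,n) ≥ 5/16; that is, the amortized value of r'(k,·) is at least 5/16. -/

import Mathlib

open Filter

/-- The `i`-th binary digit of `m`. -/
def bit (i m : ℕ) : ℕ := m / 2 ^ i % 2

/-- Position (from 0 at the right) of the mountain of the U-MMB structure on `n` leaves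
containing the `k`-th most recently appended leaf. -/
noncomputable def pos (k n : ℕ) : ℕ :=
  sInf {i : ℕ | k ≤ 2 ^ (i + 1) - 1 + (n + 1) % 2 ^ (i + 1)}

/-- `Split n i` holds iff there is a range split between the mountains at positions `i`
and `i−1` of the MMB structure on `n` leaves. -/
def Split (n i : ℕ) : Prop :=
  bit i (n + 1) = 1 ∧ (bit (i + 1) (n + 1) = 0 ∨ bit (i - 1) (n + 1) = 0)

instance (n i : ℕ) : Decidable (Split n i) := by unfold Split; infer_instance

/-- Indicator that the `k`-th most recently appended leaf lies in the leftmost mountain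
of its range in the MMB structure on `n` leaves. -/
noncomputable def rprime (k n : ℕ) : ℕ :=
  if pos k n = Nat.log 2 (n + 1) - 1 ∨ Split n (pos k n + 1) then 1 else 0


/-!
Write `K = 2 ^ ⌊log₂ k⌋`, so that `K ≤ k < 2K`. The mountain holding the `k`-th newest leaf is
at position `⌊log₂ k⌋` or `⌊log₂ k⌋ - 1`, according as `(n + 1) mod K` is below `k + 1 - K` or
not. Hence a range split just above that mountain, which already forces `r' = 1`, depends only
on `(n + 1) mod 8K`. Cut a period into the eight blocks `n + 1 = cK + m` with `m < K`: for
every `m` the split occurs in one of the blocks `c = 1, 2` and in one of the blocks `c = 5, 6`,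
and in block `c = 3` it occurs whenever `m < K / 2`. So at least `5K / 2 = (5 / 16) · 8K`
values of `n` in each period have the split, and averaging over whole periods gives the bound.
-/

lemma bit_add_two_pow_mul {i s : ℕ} (h : i < s) (x y : ℕ) : bit i (x + 2 ^ s * y) = bit i x := by
  have hs : 2 ^ s = 2 ^ i * (2 * 2 ^ (s - i - 1)) := by
    rw [← pow_succ', ← pow_add]; congr 1; omega
  unfold bit
  rw [hs, mul_assoc, Nat.add_mul_div_left _ _ (by positivity), mul_assoc,
    Nat.add_mul_mod_self_left]

lemma bit_mul_two_pow_add_of_lt {i p : ℕ} (h : i < p) (c m : ℕ) :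
    bit i (c * 2 ^ p + m) = bit i m := by
  rw [add_comm, mul_comm, bit_add_two_pow_mul h]

lemma bit_add_mul_two_pow_add {p m : ℕ} (hm : m < 2 ^ p) (j c : ℕ) :
    bit (p + j) (c * 2 ^ p + m) = bit j c := by
  unfold bit
  rw [pow_add, ← Nat.div_div_eq_div_mul, add_comm, mul_comm,
    Nat.add_mul_div_left _ _ (by positivity), Nat.div_eq_of_lt hm, zero_add]

lemma bit_eq_zero_of_lt {i m : ℕ} (h : m < 2 ^ i) : bit i m = 0 := by
  simp [bit, Nat.div_eq_of_lt h]

lemma pos_eq {k : ℕ} (hk : 1 ≤ k) (n : ℕ) :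
    pos k n = if (n + 1) % 2 ^ Nat.log 2 k < k + 1 - 2 ^ Nat.log 2 k
      then Nat.log 2 k else Nat.log 2 k - 1 := by
  set P := Nat.log 2 k
  set S := {i | k ≤ 2 ^ (i + 1) - 1 + (n + 1) % 2 ^ (i + 1)}
  have hPk : 2 ^ P ≤ k := Nat.pow_log_le_self 2 (by omega)
  have hkP : k < 2 ^ (P + 1) := Nat.lt_pow_succ_log_self (by norm_num) k
  have hP_mem : P ∈ S := by
    change k ≤ _; omega
  have below_log : ∀ i ∈ S, i + 1 ≤ P → i + 1 = P ∧ k + 1 - 2 ^ P ≤ (n + 1) % 2 ^ P := by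
    intro i hi hiP
    change k ≤ _ at hi
    have hr : (n + 1) % 2 ^ (i + 1) ≤ (n + 1) % 2 ^ P := by
      rw [← Nat.mod_mod_of_dvd _ (pow_dvd_pow 2 hiP)]; exact Nat.mod_le _ _
    have hi2 : 2 ^ (i + 1) ≤ 2 ^ P := Nat.pow_le_pow_right (by norm_num) hiP
    have hri : (n + 1) % 2 ^ (i + 1) < 2 ^ (i + 1) := Nat.mod_lt _ (by positivity)
    refine ⟨?_, by omega⟩
    by_contra hne
    have : 2 ^ (i + 2) ≤ 2 ^ P := Nat.pow_le_pow_right (by norm_num) (by omega)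
    rw [pow_succ] at this
    omega
  unfold pos
  split_ifs with hr
  · refine le_antisymm (Nat.sInf_le hP_mem) (le_csInf ⟨P, hP_mem⟩ fun i hi => ?_)
    by_contra! hiP
    have := below_log i hi hiP
    omega
  · have hP1 : P - 1 + 1 = P := by
      by_contra hP0
      have : P = 0 := by omega
      simp only [this, pow_zero, Nat.mod_one] at hr
      omega
    have hmem : P - 1 ∈ S := by
      change k ≤ _; rw [hP1]; omega
    refine le_antisymm (Nat.sInf_le hmem) (le_csInf ⟨_, hmem⟩ fun i hi => ?_)
    by_contra! hiP
    have := below_log i hi (by omega)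
    omega

def SplitAbove (k n : ℕ) : Prop := Split n (pos k n + 1)

noncomputable instance (k : ℕ) : DecidablePred (SplitAbove k) := fun n => by
  unfold SplitAbove; infer_instance

lemma splitAbove_iff_of_lt {k n c m : ℕ} (hk : 1 ≤ k) (hn : n + 1 = c * 2 ^ Nat.log 2 k + m)
    (hmK : m < 2 ^ Nat.log 2 k) (hm : m < k + 1 - 2 ^ Nat.log 2 k) :
    SplitAbove k n ↔ bit 1 c = 1 ∧ (bit 2 c = 0 ∨ bit 0 c = 0) := by
  have hmod : (n + 1) % 2 ^ Nat.log 2 k = m := by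
    rw [hn, Nat.mul_add_mod_self_right, Nat.mod_eq_of_lt hmK]
  have hbit0 : bit (Nat.log 2 k) (c * 2 ^ Nat.log 2 k + m) = bit 0 c :=
    bit_add_mul_two_pow_add hmK 0 c
  have hbit1 := bit_add_mul_two_pow_add hmK 1 c
  have hbit2 : bit (Nat.log 2 k + 1 + 1) (c * 2 ^ Nat.log 2 k + m) = bit 2 c :=
    bit_add_mul_two_pow_add hmK 2 c
  rw [SplitAbove, Split, pos_eq hk, if_pos (hmod ▸ hm), hn, Nat.add_sub_cancel, hbit0, hbit1,
    hbit2]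

lemma splitAbove_iff_of_le {k n c m : ℕ} (hk : 1 ≤ k) (hn : n + 1 = c * 2 ^ Nat.log 2 k + m)
    (hmK : m < 2 ^ Nat.log 2 k) (hm : k + 1 - 2 ^ Nat.log 2 k ≤ m) :
    SplitAbove k n ↔ bit 0 c = 1 ∧ (bit 1 c = 0 ∨ bit (Nat.log 2 k - 1) m = 0) := by
  have hmod : (n + 1) % 2 ^ Nat.log 2 k = m := by
    rw [hn, Nat.mul_add_mod_self_right, Nat.mod_eq_of_lt hmK]
  have hP : Nat.log 2 k - 1 + 1 = Nat.log 2 k := by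
    by_contra hP
    have : Nat.log 2 k = 0 := by omega
    simp only [this, pow_zero] at hmK hm
    omega
  have hbit0 : bit (Nat.log 2 k) (c * 2 ^ Nat.log 2 k + m) = bit 0 c :=
    bit_add_mul_two_pow_add hmK 0 c
  rw [SplitAbove, Split, pos_eq hk, if_neg (hmod ▸ hm).not_gt, hP, hn, hbit0,
    bit_add_mul_two_pow_add hmK 1 c, bit_mul_two_pow_add_of_lt (by omega)]

lemma periodic_splitAbove {k : ℕ} (hk : 1 ≤ k) :
    Function.Periodic (SplitAbove k) (8 * 2 ^ Nat.log 2 k) := by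
  intro n
  set K := 2 ^ Nat.log 2 k
  have hmK : (n + 1) % K < K := Nat.mod_lt _ (by positivity)
  have hn : n + 1 = (n + 1) / K * K + (n + 1) % K := (Nat.div_add_mod' _ _).symm
  have hn' : n + 8 * K + 1 = ((n + 1) / K + 2 ^ 3 * 1) * K + (n + 1) % K := by
    rw [add_mul]; omega
  have hbit : ∀ j < 3, bit j ((n + 1) / K + 2 ^ 3 * 1) = bit j ((n + 1) / K) :=
    fun j hj => bit_add_two_pow_mul hj _ _
  rw [eq_iff_iff]
  by_cases hm : (n + 1) % K < k + 1 - K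
  · rw [splitAbove_iff_of_lt hk hn' hmK hm, splitAbove_iff_of_lt hk hn hmK hm,
      hbit 0 (by norm_num), hbit 1 (by norm_num), hbit 2 (by norm_num)]
  · rw [splitAbove_iff_of_le hk hn' hmK (by omega), splitAbove_iff_of_le hk hn hmK (by omega),
      hbit 0 (by norm_num), hbit 1 (by norm_num)]

namespace Nat

variable {p q : ℕ → Prop} [DecidablePred p] [DecidablePred q]

lemma count_mul_eq_sum (K c : ℕ) :
    count p (c * K) = ∑ i ∈ Finset.range c, count (fun m => p (i * K + m)) K := by
  induction c with
  | zero => simp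
  | succ c ih => rw [add_mul, one_mul, count_add, ih, Finset.sum_range_succ]

lemma count_const_add_eq_of_periodic {M : ℕ} (hp : Function.Periodic p M) (a : ℕ) :
    count (fun m => p (a + m)) M = count p M := by
  have hIco : Finset.Ico a (a + M) = (Finset.range M).map (addLeftEmbedding a) := by
    rw [Finset.range_eq_Ico, Finset.map_add_left_Ico, add_zero]
  rw [← filter_Ico_card_eq_of_periodic a M p hp, count_eq_card_filter_range, hIco,
    Finset.filter_map, Finset.card_map]
  rfl

lemma count_mul_of_periodic {M : ℕ} (hp : Function.Periodic p M) (c : ℕ) :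
    count p (c * M) = c * count p M := by
  simp [count_mul_eq_sum, count_const_add_eq_of_periodic hp]

lemma le_count_add_count_of_forall_or {K : ℕ} (h : ∀ m < K, p m ∨ q m) :
    K ≤ count p K + count q K := by
  induction K with
  | zero => simp
  | succ K ih =>
    rw [count_succ, count_succ]
    have := ih fun m hm => h m (by omega)
    rcases h K K.lt_succ_self with hK | hK <;> simp only [hK, if_true] <;> split_ifs <;> omega

end Nat

lemma five_mul_le_sixteen_mul_count_splitAbove {k : ℕ} (hk : 1 ≤ k) :
    5 * (8 * 2 ^ Nat.log 2 k) ≤ 16 * Nat.count (SplitAbove k) (8 * 2 ^ Nat.log 2 k) := by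
  have hper := periodic_splitAbove hk
  set K := 2 ^ Nat.log 2 k
  set H := 2 ^ (Nat.log 2 k - 1)
  have hKk : K ≤ k := Nat.pow_log_le_self 2 (by omega)
  have hK : 0 < K := by positivity
  have hHK : H ≤ K := Nat.pow_le_pow_right (by norm_num) (by omega)
  have hKH : K ≤ 2 * H := by
    rw [← pow_succ']; exact Nat.pow_le_pow_right (by norm_num) (by omega)
  -- In block `i` the leaf count `n + 1` is `(i + 1) * K + m` with `m < K`.
  have hn : ∀ i m, K - 1 + (i * K + m) + 1 = (i + 1) * K + m := by
    intro i m; rw [add_mul, one_mul]; omega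
  let block (i : ℕ) := Nat.count (fun m => SplitAbove k (K - 1 + (i * K + m))) K
  have pair : ∀ i, i = 0 ∨ i = 4 → K ≤ block i + block (i + 1) := by
    intro i hi
    refine Nat.le_count_add_count_of_forall_or fun m hm => ?_
    by_cases hmb : m < k + 1 - K
    · right
      rw [splitAbove_iff_of_lt hk (hn (i + 1) m) hm hmb]
      rcases hi with rfl | rfl <;> norm_num [bit]
    · left
      rw [splitAbove_iff_of_le hk (hn i m) hm (by omega)]
      rcases hi with rfl | rfl <;> norm_num [bit]
  have h3 : H ≤ block 2 := by
    calc H = Nat.count (fun m => SplitAbove k (K - 1 + (2 * K + m))) H := by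
          refine (Nat.count_iff_forall.mpr fun m hm => ?_).symm
          by_cases hmb : m < k + 1 - K
          · rw [splitAbove_iff_of_lt hk (hn 2 m) (by omega) hmb]; norm_num [bit]
          · rw [splitAbove_iff_of_le hk (hn 2 m) (by omega) (by omega), bit_eq_zero_of_lt hm]
            norm_num [bit]
      _ ≤ block 2 := Nat.count_monotone _ hHK
  have h01 := pair 0 (.inl rfl)
  have h45 := pair 4 (.inr rfl)
  rw [← Nat.count_const_add_eq_of_periodic hper (K - 1), Nat.count_mul_eq_sum]
  simp only [block, Nat.reduceAdd] at h01 h45 h3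
  simp only [Finset.sum_range_succ, Finset.sum_range_zero]
  omega

lemma rprime_le_one (k n : ℕ) : rprime k n ≤ 1 := by
  unfold rprime; split_ifs <;> omega

lemma sum_rprime_le (k N : ℕ) : ∑ n ∈ Finset.Ico k (k + N), rprime k n ≤ N := by
  simpa using Finset.sum_le_card_nsmul (Finset.Ico k (k + N)) _ 1 fun n _ => rprime_le_one k n

lemma count_splitAbove_le_sum_rprime (k N : ℕ) :
    Nat.count (fun j => SplitAbove k (k + j)) N ≤ ∑ n ∈ Finset.Ico k (k + N), rprime k n := by
  rw [Finset.sum_Ico_eq_sum_range, Nat.add_sub_cancel_left, Nat.count_eq_card_filter_range,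
    Finset.card_filter]
  refine Finset.sum_le_sum fun j _ => ?_
  unfold rprime SplitAbove
  split_ifs <;> simp_all

lemma five_mul_le_sum_rprime {k : ℕ} (hk : 1 ≤ k) (N : ℕ) :
    5 * N ≤ 16 * ∑ n ∈ Finset.Ico k (k + N), rprime k n + 5 * (8 * 2 ^ Nat.log 2 k) := by
  have hper := periodic_splitAbove hk
  have hC := five_mul_le_sixteen_mul_count_splitAbove hk
  set M := 8 * 2 ^ Nat.log 2 k
  have hblocks : N / M * Nat.count (SplitAbove k) M ≤ ∑ n ∈ Finset.Ico k (k + N), rprime k n :=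
    calc N / M * Nat.count (SplitAbove k) M
        = Nat.count (fun j => SplitAbove k (k + j)) (N / M * M) := by
          rw [Nat.count_mul_of_periodic (hper.const_add k),
            Nat.count_const_add_eq_of_periodic hper]
      _ ≤ Nat.count (fun j => SplitAbove k (k + j)) N :=
          Nat.count_monotone _ (Nat.div_mul_le_self N M)
      _ ≤ _ := count_splitAbove_le_sum_rprime k N
  have hN : N < N / M * M + M := by
    have := Nat.div_add_mod' N M
    have := Nat.mod_lt N (show 0 < M by positivity)
    omega
  nlinarith [Nat.mul_le_mul_left (N / M) hC]

lemma le_liminf_average {S : ℕ → ℝ} {c D : ℝ} (hlow : ∀ N, c * N - D ≤ S N)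
    (hup : ∀ N, S N ≤ N) : c ≤ liminf (fun N : ℕ => (N : ℝ)⁻¹ * S N) atTop := by
  have hlim : Tendsto (fun N : ℕ => c - D / N) atTop (nhds c) := by
    simpa using tendsto_const_nhds.sub (tendsto_const_div_atTop_nhds_zero_nat D)
  have hle : ∀ᶠ N : ℕ in atTop, c - D / N ≤ (N : ℝ)⁻¹ * S N := by
    filter_upwards [eventually_ge_atTop 1] with N hN
    have hN : (0 : ℝ) < N := by exact_mod_cast hN
    rw [show c - D / N = (N : ℝ)⁻¹ * (c * N - D) by field_simp]
    exact mul_le_mul_of_nonneg_left (hlow N) (by positivity)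
  have hbdd : ∀ N : ℕ, (N : ℝ)⁻¹ * S N ≤ 1 := fun N => by
    rcases N.eq_zero_or_pos with rfl | hN
    · simp
    · rw [inv_mul_le_one₀ (by exact_mod_cast hN)]; exact hup N
  rw [← hlim.liminf_eq]
  exact liminf_le_liminf hle hlim.isBoundedUnder_ge (isCoboundedUnder_ge_of_le atTop hbdd)

/-- The amortized value of the indicator that the `k`-th newest leaf lies in the
leftmost mountain of its range is at least `5/16`. -/
theorem mmb_leftmost_indicator_liminf (k : ℕ) (hk : 1 ≤ k) :
    (5 / 16 : ℝ) ≤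
      Filter.liminf
        (fun N : ℕ => (N : ℝ)⁻¹ * ∑ n ∈ Finset.Ico k (k + N), (rprime k n : ℝ))
        atTop := by
  refine le_liminf_average (D := 5 / 16 * (8 * 2 ^ Nat.log 2 k)) (fun N => ?_) (fun N => ?_)
  · have : (5 * N : ℝ) ≤
        16 * ∑ n ∈ Finset.Ico k (k + N), (rprime k n : ℝ) + 5 * (8 * 2 ^ Nat.log 2 k) := by
      exact_mod_cast five_mul_le_sum_rprime hk N
    linarith
  · exact_mod_cast sum_rprime_le k N
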